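/- arXiv:1208.4328 — 3 statements merged into one kernel-verified Lean document; each statement's English description precedes it below -/
import Mathlib

section
/- Let α be a real number with α > 2, and let S_α := {(x,y,z) ∈ ℝ³ : x² + y² = z^α and z ≥ 0} be the α-horn (with z^α the real power). Then the projection π : S_α → ℝ², π(x,y,z) = (x,y), is a 1-Lipschitz bijection from S_α onto ℝ², and its inverse is not Lipschitz: there is no constant K ≥ 0 such that ‖p − q‖ ≤ K·‖π(p) − π(q)‖ for all p, q ∈ S_α. -/
/-- The `α`-horn `S_α = {(x,y,z) ∈ ℝ³ : x² + y² = z^α, z ≥ 0}` (with `z^α` the real power),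
as a subset of Euclidean `ℝ³`. -/
noncomputable def horn (α : ℝ) : Set (EuclideanSpace ℝ (Fin 3)) :=
  {p | p 0 ^ 2 + p 1 ^ 2 = p 2 ^ α ∧ 0 ≤ p 2}

/-- The orthogonal projection `(x,y,z) ↦ (x,y)` from `ℝ³` to `ℝ²`. -/
noncomputable def hornProj : EuclideanSpace ℝ (Fin 3) → EuclideanSpace ℝ (Fin 2) :=
  fun p => (EuclideanSpace.equiv (Fin 2) ℝ).symm ![p 0, p 1]

noncomputable def pt3 (a b c : ℝ) : EuclideanSpace ℝ (Fin 3) :=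
  (EuclideanSpace.equiv (Fin 3) ℝ).symm ![a, b, c]

lemma norm3 (p : EuclideanSpace ℝ (Fin 3)) :
    ‖p‖ = Real.sqrt (p 0 ^ 2 + p 1 ^ 2 + p 2 ^ 2) := by
  simp [EuclideanSpace.norm_eq, Fin.sum_univ_three, sq_abs]

lemma norm2 (p : EuclideanSpace ℝ (Fin 2)) :
    ‖p‖ = Real.sqrt (p 0 ^ 2 + p 1 ^ 2) := by
  simp [EuclideanSpace.norm_eq, Fin.sum_univ_two, sq_abs]

lemma hornProj_sub_apply0 (p q : EuclideanSpace ℝ (Fin 3)) :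
    (hornProj p - hornProj q) 0 = p 0 - q 0 := rfl

lemma hornProj_sub_apply1 (p q : EuclideanSpace ℝ (Fin 3)) :
    (hornProj p - hornProj q) 1 = p 1 - q 1 := rfl

/-- For `α > 2`, the projection `π(x,y,z) = (x,y)` is a `1`-Lipschitz bijection from the
`α`-horn onto `ℝ²`, but its inverse is not Lipschitz: there is no `K ≥ 0` with
`‖p − q‖ ≤ K·‖π(p) − π(q)‖` for all `p, q ∈ S_α`. -/
theorem horn_projection_lipschitz_bijection_inverse_not_lipschitz (α : ℝ) (hα : 2 < α) :
    LipschitzOnWith 1 hornProj (horn α) ∧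
    Set.BijOn hornProj (horn α) Set.univ ∧
    ¬ ∃ K : ℝ, 0 ≤ K ∧ ∀ p ∈ horn α, ∀ q ∈ horn α,
        ‖p - q‖ ≤ K * ‖hornProj p - hornProj q‖ := by
  have hα0 : (0 : ℝ) < α := by linarith
  refine ⟨?_, ⟨?_, ?_, ?_⟩, ?_⟩
  · -- Lipschitz
    rw [lipschitzOnWith_iff_dist_le_mul]
    intro p _ q _
    rw [dist_eq_norm, dist_eq_norm, NNReal.coe_one, one_mul, norm2, norm3,
      hornProj_sub_apply0, hornProj_sub_apply1]
    apply Real.sqrt_le_sqrt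
    have h0 : (p - q) 0 = p 0 - q 0 := rfl
    have h1 : (p - q) 1 = p 1 - q 1 := rfl
    have h2 : (p - q) 2 = p 2 - q 2 := rfl
    rw [h0, h1, h2]
    nlinarith [sq_nonneg (p 2 - q 2)]
  · -- maps to
    intro p _; trivial
  · -- injective on horn
    intro p hp q hq hpq
    have e0 : p 0 = q 0 := congrArg (fun v => v 0) hpq
    have e1 : p 1 = q 1 := congrArg (fun v => v 1) hpq
    have e2 : p 2 = q 2 := by
      have h : p 2 ^ α = q 2 ^ α := by
        rw [← hp.1, ← hq.1, e0, e1]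
      exact Real.rpow_left_injOn (ne_of_gt hα0) hp.2 hq.2 h
    ext i
    fin_cases i <;> assumption
  · -- surjective onto univ
    intro y _
    set r := y 0 ^ 2 + y 1 ^ 2 with hr
    have hr0 : 0 ≤ r := by positivity
    refine ⟨pt3 (y 0) (y 1) (r ^ α⁻¹), ⟨?_, ?_⟩, ?_⟩
    · show y 0 ^ 2 + y 1 ^ 2 = (r ^ α⁻¹) ^ α
      rw [← Real.rpow_mul hr0, inv_mul_cancel₀ (ne_of_gt hα0), Real.rpow_one]
    · exact Real.rpow_nonneg hr0 _
    · ext i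
      fin_cases i <;> rfl
  · -- inverse not Lipschitz
    rintro ⟨K, hK, h⟩
    set β : ℝ := α / 2 - 1 with hβ
    have hβ0 : 0 < β := by simp [hβ]; linarith
    set z : ℝ := ((2 * (K + 1))⁻¹) ^ β⁻¹ with hz
    have hz0 : 0 < z := by
      apply Real.rpow_pos_of_pos; positivity
    have hzβ : z ^ β = (2 * (K + 1))⁻¹ := by
      rw [hz, ← Real.rpow_mul (by positivity), inv_mul_cancel₀ (ne_of_gt hβ0), Real.rpow_one]
    have hzsmall : K * z ^ β < 1 := by
      rw [hzβ]
      rw [mul_inv_lt_iff₀ (by positivity)]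
      nlinarith
    -- the two witness points
    set p : EuclideanSpace ℝ (Fin 3) := pt3 (z ^ (α / 2)) 0 z with hp
    set q : EuclideanSpace ℝ (Fin 3) := pt3 0 0 0 with hq
    have hpmem : p ∈ horn α := by
      constructor
      · show (z ^ (α / 2)) ^ 2 + (0:ℝ) ^ 2 = z ^ α
        rw [← Real.rpow_natCast (z ^ (α/2)) 2, ← Real.rpow_mul hz0.le]
        norm_num
      · exact hz0.le
    have hqmem : q ∈ horn α := by
      constructor
      · show (0:ℝ) ^ 2 + (0:ℝ) ^ 2 = (0:ℝ) ^ α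
        rw [Real.zero_rpow (ne_of_gt hα0)]; norm_num
      · exact le_refl _
    have key := h p hpmem q hqmem
    have hnormpq : z ≤ ‖p - q‖ := by
      rw [norm3]
      have h0 : (p - q) 0 = z ^ (α/2) := by show z ^ (α/2) - 0 = _; ring
      have h1 : (p - q) 1 = 0 := by show (0:ℝ) - 0 = 0; ring
      have h2 : (p - q) 2 = z := by show z - 0 = z; ring
      rw [h0, h1, h2]
      rw [Real.le_sqrt' hz0]
      nlinarith [Real.rpow_nonneg hz0.le (α/2)]
    have hnormproj : ‖hornProj p - hornProj q‖ = z ^ (α / 2) := by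
      rw [norm2, hornProj_sub_apply0, hornProj_sub_apply1]
      have h0 : p 0 - q 0 = z ^ (α/2) := by show z ^ (α/2) - 0 = _; ring
      have h1 : p 1 - q 1 = 0 := by show (0:ℝ) - 0 = 0; ring
      rw [h0, h1]
      simp [Real.sqrt_sq (Real.rpow_nonneg hz0.le _)]
    rw [hnormproj] at key
    have hfinal : K * z ^ (α / 2) < z := by
      have : z ^ (α / 2) = z * z ^ β := by
        rw [show α / 2 = 1 + β by rw [hβ]; ring, Real.rpow_add hz0, Real.rpow_one]
      rw [this]
      calc K * (z * z ^ β) = (K * z ^ β) * z := by ring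
        _ < 1 * z := by exact mul_lt_mul_of_pos_right hzsmall hz0
        _ = z := one_mul z
    linarith [le_trans hnormpq key]
end

section
/- Let σ be a compact convex subset of ℝⁿ, let x₀ ∈ ℝⁿ and ρ > 0 with the open ball B(x₀,ρ) contained in σ. Define the radial projection π : ℝⁿ ∖ {x₀} → ℝⁿ by π(x) = x₀ + (g(x − x₀))⁻¹ • (x − x₀), where g is the Minkowski gauge of the translated body σ − x₀ := {y − x₀ : y ∈ σ}. Then: (i) π(x) lies in the topological frontier of σ for every x ≠ x₀, and π(x) = x for every x in the frontier of σ; (ii) for every ρ' > 0 there exists a constant L' ≥ 0 such that π is Lipschitz with constant L' on the set σ ∖ B(x₀,ρ'). -/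
set_option maxHeartbeats 1000000


open Metric

/-- Radial (Federer–Fleming) projection from an interior point `x₀` of a compact convex
body `σ ⊆ ℝⁿ` onto its frontier, via the Minkowski gauge of the translated body `σ − x₀`:
(i) `π(x) = x₀ + (g(x − x₀))⁻¹ • (x − x₀)` lands in the frontier of `σ` for every `x ≠ x₀`
and fixes the frontier pointwise; (ii) for every `ρ' > 0`, `π` is Lipschitz (with some
constant `L' ≥ 0`) on `σ ∖ B(x₀, ρ')`. -/
theorem radial_projection_frontier_and_lipschitz {n : ℕ}
    (σ : Set (EuclideanSpace ℝ (Fin n))) (hcomp : IsCompact σ) (hconv : Convex ℝ σ)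
    (x₀ : EuclideanSpace ℝ (Fin n)) (ρ : ℝ) (hρ : 0 < ρ) (hball : ball x₀ ρ ⊆ σ) :
    (∀ x : EuclideanSpace ℝ (Fin n), x ≠ x₀ →
      x₀ + (gauge ((fun y => y - x₀) '' σ) (x - x₀))⁻¹ • (x - x₀) ∈ frontier σ) ∧
    (∀ x ∈ frontier σ,
      x₀ + (gauge ((fun y => y - x₀) '' σ) (x - x₀))⁻¹ • (x - x₀) = x) ∧
    (∀ ρ' : ℝ, 0 < ρ' → ∃ L' : NNReal,
      LipschitzOnWith L'
        (fun x => x₀ + (gauge ((fun y => y - x₀) '' σ) (x - x₀))⁻¹ • (x - x₀))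
        (σ \ ball x₀ ρ')) := by
  set C : Set (EuclideanSpace ℝ (Fin n)) := (fun y => y - x₀) '' σ with hCdef
  have hCconv : Convex ℝ C := by
    have := hconv.translate (-x₀)
    convert this using 2
    ext y; simp [sub_eq_neg_add]; abel
  have hballC : ball (0 : EuclideanSpace ℝ (Fin n)) ρ ⊆ C := by
    intro y hy
    refine ⟨y + x₀, hball ?_, by simp⟩
    simpa [mem_ball, dist_eq_norm] using hy
  have hC0 : C ∈ nhds (0 : EuclideanSpace ℝ (Fin n)) :=
    Filter.mem_of_superset (ball_mem_nhds 0 hρ) hballC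
  have habs : Absorbent ℝ C := absorbent_nhds_zero hC0
  have hCcomp : IsCompact C := hcomp.image (continuous_id.sub continuous_const)
  have hbdd : Bornology.IsVonNBounded ℝ C :=
    (NormedSpace.isVonNBounded_iff ℝ).2 hCcomp.isBounded
  have hfrC : frontier C = (fun y => y - x₀) '' frontier σ := by
    have h1 : C = (Homeomorph.subRight x₀) '' σ := rfl
    rw [h1, ← Homeomorph.image_frontier]
    rfl
  have hfr : ∀ z, z ∈ frontier C ↔ x₀ + z ∈ frontier σ := by
    intro z
    rw [hfrC]
    constructor
    · rintro ⟨w, hw, rfl⟩; simpa using hw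
    · intro h; exact ⟨x₀ + z, h, by simp⟩
  refine ⟨?_, ?_, ?_⟩
  · intro x hx
    have hv : x - x₀ ≠ 0 := sub_ne_zero.2 hx
    have hg : 0 < gauge C (x - x₀) := (gauge_pos habs hbdd).2 hv
    have h1 : gauge C ((gauge C (x - x₀))⁻¹ • (x - x₀)) = 1 := by
      rw [gauge_smul_of_nonneg (inv_nonneg.2 hg.le), smul_eq_mul, inv_mul_cancel₀ hg.ne']
    exact (hfr _).1 ((gauge_eq_one_iff_mem_frontier hCconv hC0).1 h1)
  · intro x hx
    have hz : x - x₀ ∈ frontier C := hfrC ▸ ⟨x, hx, rfl⟩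
    have h1 : gauge C (x - x₀) = 1 := (gauge_eq_one_iff_mem_frontier hCconv hC0).2 hz
    rw [h1]
    simp
  · intro ρ' hρ'
    obtain ⟨r, hr⟩ := hCcomp.isBounded.subset_closedBall 0
    set R : ℝ := max r 1 with hRdef
    have hR : (0 : ℝ) < R := lt_of_lt_of_le one_pos (le_max_right _ _)
    have hCR : C ⊆ closedBall 0 R := hr.trans (closedBall_subset_closedBall (le_max_left _ _))
    have hlow : ∀ w, ‖w‖ / R ≤ gauge C w := by
      intro w
      have := gauge_mono habs hCR w
      rwa [gauge_closedBall hR.le] at this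
    have hLg : LipschitzWith (⟨ρ, hρ.le⟩ : NNReal)⁻¹ (gauge C) :=
      hCconv.lipschitzWith_gauge (by exact_mod_cast hρ) hballC
    set K : ℝ := R / ρ' + (R / ρ') * (R / ρ') * R / ρ with hKdef
    have hK0 : (0 : ℝ) ≤ K := by positivity
    refine ⟨Real.toNNReal K, ?_⟩
    rw [lipschitzOnWith_iff_dist_le_mul]
    intro x hx y hy
    rw [Real.coe_toNNReal K hK0]
    set u := x - x₀ with hu
    set v := y - x₀ with hv'
    have hxu : u ∈ C := ⟨x, hx.1, rfl⟩
    have hyv : v ∈ C := ⟨y, hy.1, rfl⟩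
    have hnu : ρ' ≤ ‖u‖ := by
      have := hx.2
      simpa [mem_ball, dist_eq_norm, not_lt] using this
    have hnvR : ‖v‖ ≤ R := by simpa using hCR hyv
    have hnv : ρ' ≤ ‖v‖ := by
      have := hy.2
      simpa [mem_ball, dist_eq_norm, not_lt] using this
    set gu := gauge C u with hgu
    set gv := gauge C v with hgv
    have hgu1 : gu ≤ 1 := gauge_le_one_of_mem hxu
    have hgv1 : gv ≤ 1 := gauge_le_one_of_mem hyv
    have hgul : ρ' / R ≤ gu := le_trans (by gcongr) (hlow u)
    have hgvl : ρ' / R ≤ gv := le_trans (by gcongr) (hlow v)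
    have hgu0 : (0 : ℝ) < gu := lt_of_lt_of_le (by positivity) hgul
    have hgv0 : (0 : ℝ) < gv := lt_of_lt_of_le (by positivity) hgvl
    have hAu : gu⁻¹ ≤ R / ρ' := by
      rw [← inv_div ρ' R]
      gcongr
    have hAv : gv⁻¹ ≤ R / ρ' := by
      rw [← inv_div ρ' R]
      gcongr
    have hd : |gu - gv| ≤ ‖u - v‖ / ρ := by
      have h := hLg.dist_le_mul u v
      rw [Real.dist_eq, dist_eq_norm] at h
      push_cast at h
      rw [div_eq_inv_mul]
      convert h using 2
      exact (NNReal.coe_inv (⟨ρ, hρ.le⟩ : NNReal)).symm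
    have hd' : |gv - gu| ≤ ‖u - v‖ / ρ := by rwa [abs_sub_comm]
    have hABd : |gu⁻¹ - gv⁻¹| ≤ (‖u - v‖ / ρ) * ((R / ρ') * (R / ρ')) := by
      have heq : gu⁻¹ - gv⁻¹ = (gv - gu) * (gu⁻¹ * gv⁻¹) := by
        field_simp
      rw [heq, abs_mul, abs_mul, abs_of_pos (inv_pos.2 hgu0), abs_of_pos (inv_pos.2 hgv0)]
      gcongr
    have hdist : dist (x₀ + gu⁻¹ • u) (x₀ + gv⁻¹ • v) = ‖gu⁻¹ • u - gv⁻¹ • v‖ := by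
      rw [dist_add_left, dist_eq_norm]
    have hsplit' : ∀ (a b : ℝ) (p q : EuclideanSpace ℝ (Fin n)),
        a • p - b • q = a • (p - q) + (a - b) • q := by
      intro a b p q
      rw [smul_sub, sub_smul]
      abel
    have hsplit : gu⁻¹ • u - gv⁻¹ • v = gu⁻¹ • (u - v) + (gu⁻¹ - gv⁻¹) • v :=
      hsplit' _ _ _ _
    have huvxy : u - v = x - y := by rw [hu, hv']; abel
    calc dist (x₀ + gu⁻¹ • u) (x₀ + gv⁻¹ • v) = ‖gu⁻¹ • u - gv⁻¹ • v‖ := hdist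
      _ ≤ ‖gu⁻¹ • (u - v)‖ + ‖(gu⁻¹ - gv⁻¹) • v‖ := by rw [hsplit]; exact norm_add_le _ _
      _ = gu⁻¹ * ‖u - v‖ + |gu⁻¹ - gv⁻¹| * ‖v‖ := by
          rw [norm_smul, norm_smul, Real.norm_eq_abs, Real.norm_eq_abs,
            abs_of_pos (inv_pos.2 hgu0)]
      _ ≤ (R / ρ') * ‖u - v‖ + ((‖u - v‖ / ρ) * ((R / ρ') * (R / ρ'))) * R := by gcongr
      _ = K * ‖u - v‖ := by rw [hKdef]; ring
      _ = K * dist x y := by rw [huvxy, dist_eq_norm]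
end

section
/- Let X be a closed subset of ℝⁿ containing the origin and Y a subset of ℝᵐ. Let Φ : X → Y be a continuous map with Φ(0) = 0 and Φ(x) ≠ 0 for every x ∈ X ∖ {0}. Suppose there is a map D : S₀X → Sᵐ⁻¹ such that for every u ∈ S₀X and every sequence (x_k) in X ∖ {0} with x_k → 0 and x_k/‖x_k‖ → u, one has Φ(x_k)/‖Φ(x_k)‖ → D(u). Then the map F : X' → Sᵐ⁻¹ × [0,∞) defined by F(x/‖x‖, ‖x‖) := (Φ(x)/‖Φ(x)‖, ‖Φ(x)‖) for x ∈ X ∖ {0} and F(u,0) := (D(u),0) for u ∈ S₀X is well defined and continuous on X', maps X' into the strict transform Y' of Y, and maps the boundary ∂X' into the boundary ∂Y' (in particular D(u) ∈ S₀Y for every u ∈ S₀X). -/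
open Filter Topology

def tangentLink {E : Type*} [NormedAddCommGroup E] [NormedSpace ℝ E] (X : Set E) : Set E :=
  {u | ‖u‖ = 1 ∧ ∃ x : ℕ → E, (∀ k, x k ∈ X ∧ x k ≠ 0) ∧
    Tendsto x atTop (𝓝 0) ∧ Tendsto (fun k => ‖x k‖⁻¹ • x k) atTop (𝓝 u)}

def strictTransform {E : Type*} [NormedAddCommGroup E] [NormedSpace ℝ E] (X : Set E) :
    Set (E × ℝ) :=
  closure {p | ∃ x ∈ X, x ≠ 0 ∧ p = (‖x‖⁻¹ • x, ‖x‖)}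

lemma norm_dir {E : Type*} [NormedAddCommGroup E] [NormedSpace ℝ E] {x : E} (hx : x ≠ 0) :
    ‖‖x‖⁻¹ • x‖ = 1 := by
  rw [norm_smul, norm_inv, norm_norm, inv_mul_cancel₀ (norm_ne_zero_iff.2 hx)]

lemma tangent_mem_strictTransform {E : Type*} [NormedAddCommGroup E] [NormedSpace ℝ E]
    {X : Set E} {u : E} (hu : u ∈ tangentLink X) : (u, (0:ℝ)) ∈ strictTransform X := by
  obtain ⟨-, x, hxm, hx0, hxd⟩ := hu
  have hn : Tendsto (fun k => ‖x k‖) atTop (𝓝 (0:ℝ)) := by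
    simpa using hx0.norm
  refine mem_closure_of_tendsto (b := atTop) (f := fun k => ((‖x k‖⁻¹ • x k, ‖x k‖) : E × ℝ))
    (hxd.prodMk_nhds hn) ?_
  filter_upwards with k
  exact ⟨x k, (hxm k).1, (hxm k).2, rfl⟩

lemma mem_strictTransform_iff {E : Type*} [NormedAddCommGroup E] [NormedSpace ℝ E]
    {X : Set E} (hX : IsClosed X) (p : E × ℝ) :
    p ∈ strictTransform X ↔
      (∃ x ∈ X, x ≠ 0 ∧ p = (‖x‖⁻¹ • x, ‖x‖)) ∨ (p.1 ∈ tangentLink X ∧ p.2 = 0) := by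
  constructor
  · intro hp
    obtain ⟨b, hb, hbt⟩ := mem_closure_iff_seq_limit.1 hp
    choose x hxX hx0 hbx using hb
    have hd : Tendsto (fun k => ‖x k‖⁻¹ • x k) atTop (𝓝 p.1) := by
      have := (continuous_fst.tendsto p).comp hbt
      refine this.congr fun k => ?_
      simp [Function.comp, hbx k]
    have hr : Tendsto (fun k => ‖x k‖) atTop (𝓝 p.2) := by
      have := (continuous_snd.tendsto p).comp hbt
      refine this.congr fun k => ?_
      simp [Function.comp, hbx k]
    have hp2 : 0 ≤ p.2 := ge_of_tendsto' hr fun k => norm_nonneg _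
    rcases hp2.lt_or_eq with hpos | hzero
    · left
      have hxt : Tendsto x atTop (𝓝 (p.2 • p.1)) := by
        refine (hr.smul hd).congr fun k => ?_
        exact smul_inv_smul₀ (norm_ne_zero_iff.2 (hx0 k)) (x k)
      have hmem : p.2 • p.1 ∈ X :=
        hX.mem_of_tendsto hxt (Eventually.of_forall hxX)
      have hnorm : ‖p.2 • p.1‖ = p.2 :=
        tendsto_nhds_unique ((continuous_norm.tendsto _).comp hxt) hr
      have hne : p.2 • p.1 ≠ 0 := by
        intro h; rw [h, norm_zero] at hnorm; exact hpos.ne hnorm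
      refine ⟨p.2 • p.1, hmem, hne, ?_⟩
      have h1 : ‖p.2 • p.1‖⁻¹ • (p.2 • p.1) = p.1 := by
        rw [hnorm, inv_smul_smul₀ hpos.ne']
      rw [h1, hnorm]
    · right
      refine ⟨⟨?_, x, fun k => ⟨hxX k, hx0 k⟩, ?_, hd⟩, hzero.symm⟩
      · refine tendsto_nhds_unique ((continuous_norm.tendsto _).comp hd) ?_
        refine tendsto_const_nhds.congr fun k => ?_
        exact (norm_dir (hx0 k)).symm
      · have hr0 : Tendsto (fun k => ‖x k‖) atTop (𝓝 0) := hzero ▸ hr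
        have := hr0.smul hd
        rw [zero_smul] at this
        refine this.congr fun k => ?_
        exact smul_inv_smul₀ (norm_ne_zero_iff.2 (hx0 k)) (x k)
  · rintro (⟨x, hx, hx0, rfl⟩ | ⟨h1, h2⟩)
    · exact subset_closure ⟨x, hx, hx0, rfl⟩
    · have : p = (p.1, (0:ℝ)) := by rw [← h2]
      rw [this]
      exact tangent_mem_strictTransform h1

/-- If `Φ : X → Y` is continuous with `Φ(0) = 0`, `Φ ≠ 0` away from `0`, and the directions
`Φ(x_k)/‖Φ(x_k)‖` converge to `D(u)` along every sequence `x_k → 0` in `X ∖ {0}` whose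
directions converge to `u ∈ S₀X`, then the blow-up extension
`G(x/‖x‖, ‖x‖) = (Φ(x)/‖Φ(x)‖, ‖Φ(x)‖)`, `G(u,0) = (D(u),0)` is well defined and
continuous on the strict transform `X'`, maps `X'` into `Y'` and `∂X'` into `∂Y'`
(in particular `D(u) ∈ S₀Y` for all `u ∈ S₀X`). -/
theorem blowup_extension_continuous {n m : ℕ}
    (X : Set (EuclideanSpace ℝ (Fin n))) (Y : Set (EuclideanSpace ℝ (Fin m)))
    (hX : IsClosed X) (h0X : (0 : EuclideanSpace ℝ (Fin n)) ∈ X)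
    (Φ : EuclideanSpace ℝ (Fin n) → EuclideanSpace ℝ (Fin m))
    (hΦcont : ContinuousOn Φ X) (hΦmap : Set.MapsTo Φ X Y)
    (hΦ0 : Φ 0 = 0) (hΦne : ∀ x ∈ X, x ≠ 0 → Φ x ≠ 0)
    (D : EuclideanSpace ℝ (Fin n) → EuclideanSpace ℝ (Fin m))
    (hD : ∀ u ∈ tangentLink X, ∀ x : ℕ → EuclideanSpace ℝ (Fin n),
      (∀ k, x k ∈ X ∧ x k ≠ 0) → Tendsto x atTop (𝓝 0) →
      Tendsto (fun k => ‖x k‖⁻¹ • x k) atTop (𝓝 u) →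
      Tendsto (fun k => ‖Φ (x k)‖⁻¹ • Φ (x k)) atTop (𝓝 (D u))) :
    ∃ G : EuclideanSpace ℝ (Fin n) × ℝ → EuclideanSpace ℝ (Fin m) × ℝ,
      (∀ x ∈ X, x ≠ (0 : EuclideanSpace ℝ (Fin n)) →
        G (‖x‖⁻¹ • x, ‖x‖) = (‖Φ x‖⁻¹ • Φ x, ‖Φ x‖)) ∧
      (∀ u ∈ tangentLink X, G (u, 0) = (D u, 0)) ∧
      ContinuousOn G (strictTransform X) ∧
      Set.MapsTo G (strictTransform X) (strictTransform Y) ∧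
      Set.MapsTo G (strictTransform X ∩ (Metric.sphere 0 1 ×ˢ ({0} : Set ℝ)))
        (strictTransform Y ∩ (Metric.sphere 0 1 ×ˢ ({0} : Set ℝ))) ∧
      (∀ u ∈ tangentLink X, D u ∈ tangentLink Y) := by
  classical
  set G : EuclideanSpace ℝ (Fin n) × ℝ → EuclideanSpace ℝ (Fin m) × ℝ :=
    fun q => if q.2 ≤ 0 then (D q.1, 0)
      else (‖Φ (q.2 • q.1)‖⁻¹ • Φ (q.2 • q.1), ‖Φ (q.2 • q.1)‖) with hGdef
  have hGpos : ∀ x ∈ X, x ≠ 0 → G (‖x‖⁻¹ • x, ‖x‖) = (‖Φ x‖⁻¹ • Φ x, ‖Φ x‖) := by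
    intro x hx hx0
    have hn : (0:ℝ) < ‖x‖ := norm_pos_iff.2 hx0
    have hxx : (‖x‖ : ℝ) • (‖x‖⁻¹ • x) = x := smul_inv_smul₀ hn.ne' x
    simp only [hGdef]
    rw [if_neg (not_le.2 hn : ¬((‖x‖⁻¹ • x, ‖x‖) : _ × ℝ).2 ≤ 0)]
    rw [show (((‖x‖⁻¹ • x, ‖x‖) : _ × ℝ).2 • ((‖x‖⁻¹ • x, ‖x‖) : _ × ℝ).1 :
      EuclideanSpace ℝ (Fin n)) = x from hxx]
  have hGzero : ∀ u, G (u, 0) = (D u, 0) := by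
    intro u
    simp only [hGdef]
    rw [if_pos (le_refl (((u, (0:ℝ))) : _ × ℝ).2)]
  have hPhiseq : ∀ x : ℕ → EuclideanSpace ℝ (Fin n), (∀ k, x k ∈ X) →
      Tendsto x atTop (𝓝 0) → Tendsto (fun k => Φ (x k)) atTop (𝓝 0) := by
    intro x hxm hx0
    have h : Tendsto Φ (𝓝[X] 0) (𝓝 (Φ 0)) := hΦcont 0 h0X
    rw [hΦ0] at h
    exact h.comp (tendsto_nhdsWithin_iff.2 ⟨hx0, Eventually.of_forall hxm⟩)
  have hDtan : ∀ u ∈ tangentLink X, D u ∈ tangentLink Y := by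
    intro u hu
    obtain ⟨hu1, x, hxm, hx0, hxd⟩ := hu
    have hPhid := hD u ⟨hu1, x, hxm, hx0, hxd⟩ x hxm hx0 hxd
    have hPhix := hPhiseq x (fun k => (hxm k).1) hx0
    refine ⟨?_, fun k => Φ (x k), fun k => ⟨hΦmap (hxm k).1, hΦne _ (hxm k).1 (hxm k).2⟩,
      hPhix, hPhid⟩
    refine tendsto_nhds_unique ((continuous_norm.tendsto _).comp hPhid) ?_
    refine tendsto_const_nhds.congr fun k => ?_
    exact (norm_dir (hΦne _ (hxm k).1 (hxm k).2)).symm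
  have hseq : ∀ u ∈ tangentLink X, ∀ p : ℕ → EuclideanSpace ℝ (Fin n) × ℝ,
      (∀ k, p k ∈ strictTransform X) → Tendsto p atTop (𝓝 (u, 0)) →
      Tendsto (fun k => G (p k)) atTop (𝓝 (D u, 0)) := by
    intro u hu p hpm hpt
    have key : ∀ k : ℕ, ∃ x : EuclideanSpace ℝ (Fin n), x ∈ X ∧ x ≠ 0 ∧
        ‖x‖ ≤ (p k).2 + 1/(k+1) ∧ ‖‖x‖⁻¹ • x - (p k).1‖ ≤ 1/(k+1) ∧
        dist ((‖Φ x‖⁻¹ • Φ x, ‖Φ x‖) : EuclideanSpace ℝ (Fin m) × ℝ) (G (p k)) ≤ 1/(k+1) := by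
      intro k
      have hε : (0:ℝ) < 1/(k+1) := by positivity
      rcases (mem_strictTransform_iff hX (p k)).1 (hpm k) with ⟨x, hx, hx0, hpk⟩ | ⟨h1, h2⟩
      · refine ⟨x, hx, hx0, ?_, ?_, ?_⟩
        · rw [hpk]; show ‖x‖ ≤ ‖x‖ + 1/(k+1); linarith
        · rw [hpk]; show ‖‖x‖⁻¹ • x - ‖x‖⁻¹ • x‖ ≤ 1/(k+1); simpa using hε.le
        · have hG : G (p k) = (‖Φ x‖⁻¹ • Φ x, ‖Φ x‖) := by rw [hpk]; exact hGpos x hx hx0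
          rw [hG, dist_self]; exact hε.le
      · obtain ⟨hu1, y, hym, hy0, hyd⟩ := h1
        have hyPd := hD _ ⟨hu1, y, hym, hy0, hyd⟩ y hym hy0 hyd
        have hyP0 : Tendsto (fun j => ‖Φ (y j)‖) atTop (𝓝 0) := by
          simpa using (hPhiseq y (fun j => (hym j).1) hy0).norm
        have hyn : Tendsto (fun j => ‖y j‖) atTop (𝓝 (0:ℝ)) := by simpa using hy0.norm
        obtain ⟨N1, hN1⟩ := (Metric.tendsto_atTop.1 hyn) _ hε
        obtain ⟨N2, hN2⟩ := (Metric.tendsto_atTop.1 hyd) _ hε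
        obtain ⟨N3, hN3⟩ := (Metric.tendsto_atTop.1 hyPd) _ hε
        obtain ⟨N4, hN4⟩ := (Metric.tendsto_atTop.1 hyP0) _ hε
        set j := max (max N1 N2) (max N3 N4) with hj
        refine ⟨y j, (hym j).1, (hym j).2, ?_, ?_, ?_⟩
        · have := hN1 j (le_trans (le_max_left _ _) (le_max_left _ _))
          rw [Real.dist_eq, sub_zero, abs_of_nonneg (norm_nonneg _)] at this
          rw [h2] at *
          linarith
        · have := hN2 j (le_trans (le_max_right _ _) (le_max_left _ _))
          rw [dist_eq_norm] at this
          exact this.le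
        · have hGpk : G (p k) = (D (p k).1, 0) := by
            have hpk' : p k = ((p k).1, (0:ℝ)) := by rw [← h2]
            rw [hpk', hGzero]
          rw [hGpk, Prod.dist_eq]
          have h3 := hN3 j (le_trans (le_max_left _ _) (le_max_right _ _))
          have h4 := hN4 j (le_trans (le_max_right _ _) (le_max_right _ _))
          exact max_le h3.le h4.le
    choose x hxX hx0 hxb hxd hxG using key
    have hp1 : Tendsto (fun k => (p k).1) atTop (𝓝 u) := (continuous_fst.tendsto _).comp hpt
    have hp2 : Tendsto (fun k => (p k).2) atTop (𝓝 (0:ℝ)) := (continuous_snd.tendsto _).comp hpt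
    have hone : Tendsto (fun k : ℕ => 1/((k:ℝ)+1)) atTop (𝓝 0) :=
      tendsto_one_div_add_atTop_nhds_zero_nat
    have hxt : Tendsto x atTop (𝓝 0) := by
      rw [tendsto_zero_iff_norm_tendsto_zero]
      refine squeeze_zero (fun k => norm_nonneg _) hxb ?_
      simpa using hp2.add hone
    have hxdt : Tendsto (fun k => ‖x k‖⁻¹ • x k) atTop (𝓝 u) := by
      rw [tendsto_iff_norm_sub_tendsto_zero]
      refine squeeze_zero (g := fun k => 1/(k+1) + ‖(p k).1 - u‖) (fun k => norm_nonneg _)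
        (fun k => ?_) ?_
      · have ht := dist_triangle (‖x k‖⁻¹ • x k) ((p k).1) u
        rw [dist_eq_norm, dist_eq_norm, dist_eq_norm] at ht
        have := hxd k
        linarith
      · have := hone.add (tendsto_iff_norm_sub_tendsto_zero.1 hp1)
        simpa using this
    have hPd := hD u hu x (fun k => ⟨hxX k, hx0 k⟩) hxt hxdt
    have hP0 : Tendsto (fun k => ‖Φ (x k)‖) atTop (𝓝 (0:ℝ)) := by
      simpa using (hPhiseq x hxX hxt).norm
    have hq : Tendsto (fun k => ((‖Φ (x k)‖⁻¹ • Φ (x k), ‖Φ (x k)‖) :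
        EuclideanSpace ℝ (Fin m) × ℝ)) atTop (𝓝 (D u, 0)) := hPd.prodMk_nhds hP0
    rw [tendsto_iff_dist_tendsto_zero]
    refine squeeze_zero (g := fun k => 1/(k+1) + dist ((‖Φ (x k)‖⁻¹ • Φ (x k), ‖Φ (x k)‖) :
        EuclideanSpace ℝ (Fin m) × ℝ) (D u, 0)) (fun k => dist_nonneg) (fun k => ?_) ?_
    · have ht := dist_triangle (G (p k)) ((‖Φ (x k)‖⁻¹ • Φ (x k), ‖Φ (x k)‖) :
        EuclideanSpace ℝ (Fin m) × ℝ) (D u, 0)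
      have h' := hxG k
      rw [dist_comm] at h'
      linarith
    · have := hone.add (tendsto_iff_dist_tendsto_zero.1 hq)
      simpa using this
  have hcont : ContinuousOn G (strictTransform X) := by
    intro p hp
    rcases (mem_strictTransform_iff hX p).1 hp with ⟨x, hx, hx0, hpx⟩ | ⟨h1, h2⟩
    · have hppos : 0 < p.2 := by rw [hpx]; exact norm_pos_iff.2 hx0
      have hU : {q : EuclideanSpace ℝ (Fin n) × ℝ | 0 < q.2} ∈ 𝓝 p :=
        (isOpen_lt continuous_const continuous_snd).mem_nhds hppos
      refine (continuousWithinAt_inter hU).1 ?_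
      set S := strictTransform X ∩ {q : EuclideanSpace ℝ (Fin n) × ℝ | 0 < q.2} with hS
      have hψ : ∀ q ∈ S, q.2 • q.1 ∈ X ∧ q.2 • q.1 ≠ 0 := by
        rintro q ⟨hq, hqpos⟩
        rcases (mem_strictTransform_iff hX q).1 hq with ⟨z, hz, hz0, hqz⟩ | ⟨-, h2⟩
        · have hzz : q.2 • q.1 = z := by
            rw [hqz]; exact smul_inv_smul₀ (norm_ne_zero_iff.2 hz0) z
          rw [hzz]; exact ⟨hz, hz0⟩
        · exact absurd h2 (show (0:ℝ) < q.2 from hqpos).ne'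
      have hg : ContinuousOn (fun q : EuclideanSpace ℝ (Fin n) × ℝ => Φ (q.2 • q.1)) S :=
        hΦcont.comp ((continuous_snd.smul continuous_fst).continuousOn)
          (fun q hq => (hψ q hq).1)
      have hgne : ∀ q ∈ S, Φ (q.2 • q.1) ≠ 0 := fun q hq => hΦne _ (hψ q hq).1 (hψ q hq).2
      have hH : ContinuousOn (fun q : EuclideanSpace ℝ (Fin n) × ℝ =>
          ((‖Φ (q.2 • q.1)‖⁻¹ • Φ (q.2 • q.1), ‖Φ (q.2 • q.1)‖) :
            EuclideanSpace ℝ (Fin m) × ℝ)) S :=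
        ((hg.norm.inv₀ fun q hq => norm_ne_zero_iff.2 (hgne q hq)).smul hg).prodMk hg.norm
      refine (hH p ⟨hp, hppos⟩).congr ?_ ?_
      · rintro q ⟨hq, hqpos⟩
        simp only [hGdef]
        rw [if_neg (not_le.2 (show (0:ℝ) < q.2 from hqpos))]
      · simp only [hGdef]
        rw [if_neg (not_le.2 hppos)]
    · have hp' : p = (p.1, (0:ℝ)) := by rw [← h2]
      have hGp : G p = (D p.1, 0) := by rw [hp', hGzero]
      have : ContinuousWithinAt G (strictTransform X) p := by
        rw [ContinuousWithinAt, hGp]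
        refine tendsto_iff_seq_tendsto.2 fun s hs => ?_
        obtain ⟨hst, hsm⟩ := tendsto_nhdsWithin_iff.1 hs
        obtain ⟨N, hN⟩ := eventually_atTop.1 hsm
        have hst' : Tendsto (fun k => s (k + N)) atTop (𝓝 (p.1, (0:ℝ))) := by
          rw [← hp']
          exact (tendsto_add_atTop_iff_nat N).2 hst
        have h := hseq p.1 h1 (fun k => s (k + N)) (fun k => hN _ (Nat.le_add_left N k)) hst'
        exact (tendsto_add_atTop_iff_nat (f := G ∘ s) N).1 h
      exact this
  have hmaps : Set.MapsTo G (strictTransform X) (strictTransform Y) := by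
    intro p hp
    rcases (mem_strictTransform_iff hX p).1 hp with ⟨x, hx, hx0, hpx⟩ | ⟨h1, h2⟩
    · rw [hpx, hGpos x hx hx0]
      exact subset_closure ⟨Φ x, hΦmap hx, hΦne x hx hx0, rfl⟩
    · have hp' : p = (p.1, (0:ℝ)) := by rw [← h2]
      rw [hp', hGzero]
      exact tangent_mem_strictTransform (hDtan _ h1)
  have hbd : Set.MapsTo G (strictTransform X ∩ (Metric.sphere 0 1 ×ˢ ({0} : Set ℝ)))
      (strictTransform Y ∩ (Metric.sphere 0 1 ×ˢ ({0} : Set ℝ))) := by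
    rintro p ⟨hp, hps⟩
    have h2 : p.2 = 0 := hps.2
    have h1 : p.1 ∈ tangentLink X := by
      rcases (mem_strictTransform_iff hX p).1 hp with ⟨x, hx, hx0, hpx⟩ | ⟨h1, -⟩
      · exfalso
        apply hx0
        have hxn : ‖x‖ = 0 := by rw [hpx] at h2; simpa using h2
        exact norm_eq_zero.1 hxn
      · exact h1
    have hp' : p = (p.1, (0:ℝ)) := by rw [← h2]
    rw [hp', hGzero]
    refine ⟨tangent_mem_strictTransform (hDtan _ h1), Set.mem_prod.2 ⟨?_, rfl⟩⟩
    exact mem_sphere_zero_iff_norm.2 (hDtan _ h1).1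
  exact ⟨G, hGpos, fun u hu => hGzero u, hcont, hmaps, hbd, hDtan⟩
end
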